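/- Let m ≥ 2, k ≥ m-1, h > 0, r > 0, s = ±1, and define b_k ∈ ℝ^m by x_i = (-1)^(i-1) · (C(m+k-i, m-i+1) - 2) · h^(m-i+1) · r · s and b_{k-1} by x_i = (-1)^(i-1) · (C(m+k-i-1, m-i+1) - 2) · h^(m-i+1) · r · s. Then both points satisfy Σ_{i=0}^{m-1} C(k, i) · h^i · x_{i+1} = (-1)^(m-1) · (C(k, m) - 2·C(k-1, m-1)) · h^m · r · s. -/

import Mathlib

/-
With d = k for b_k and d = k - 1 for b_{k-1}, the i-th coordinate is
(-1)^i (C(d + (m-i) - 1, m-i) - 2) h^(m-i) r s, and C(d + j - 1, j) is the coefficient of X^j in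
(1 - X)^(-d). So the weighted sum is h^m r s times Σ_{i<m} (-1)^i C(k,i) C(d + (m-i) - 1, m-i)
minus twice Σ_{i<m} (-1)^i C(k,i). The second sum is the X^(m-1)-coefficient of
(1 - X)^k (1 - X)^(-1) = (1 - X)^(k-1). The first is the X^m-coefficient of
(1 - X)^k (1 - X)^(-d) = (1 - X)^(k-d) without its i = m term (-1)^m C(k,m); as k - d < m that
coefficient is 0, so the first sum is (-1)^(m-1) C(k,m).
-/

open Finset PowerSeries

theorem PowerSeries.coeff_one_sub_X_pow {R : Type*} [CommRing R] (k n : ℕ) :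
    coeff n ((1 - X : R⟦X⟧) ^ k) = (-1) ^ n * k.choose n := by
  induction k generalizing n with
  | zero => rcases n with _ | n <;> simp [coeff_one]
  | succ k ih =>
    rw [pow_succ, mul_one_sub, map_sub]
    rcases n with _ | n
    · simp [ih]
    · rw [coeff_succ_mul_X, ih, ih, Nat.choose_succ_succ']
      push_cast
      ring

-- At d = 0 the truncated subtraction gives C(n - 1, n) = [n = 0], the coefficients of 1.
theorem PowerSeries.coeff_invOneSubPow {R : Type*} [CommRing R] (d n : ℕ) :
    coeff n (invOneSubPow R d : R⟦X⟧) = (d + n - 1).choose n := by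
  rcases d with _ | d
  · rcases n with _ | n <;> simp [invOneSubPow_zero, coeff_one]
  · rw [invOneSubPow_val_succ_eq_mk_add_choose, coeff_mk, Nat.add_right_comm, Nat.add_sub_cancel,
      Nat.choose_symm_add]

theorem sum_range_succ_neg_one_pow_mul_choose_mul_choose {R : Type*} [CommRing R] {d k : ℕ}
    (hdk : d ≤ k) (n : ℕ) :
    ∑ i ∈ range (n + 1), (-1 : R) ^ i * k.choose i * (d + (n - i) - 1).choose (n - i) =
      (-1) ^ n * (k - d).choose n := by
  obtain ⟨e, rfl⟩ := Nat.exists_eq_add_of_le' hdk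
  have hfactor : (1 - X : R⟦X⟧) ^ (e + d) * (invOneSubPow R d : R⟦X⟧) = (1 - X) ^ e := by
    rw [pow_add, mul_assoc, ← invOneSubPow_inv_eq_one_sub_pow R d, (invOneSubPow R d).inv_val, mul_one]
  have hcoeff := congrArg (coeff n) hfactor
  rw [coeff_mul, Nat.sum_antidiagonal_eq_sum_range_succ_mk] at hcoeff
  simpa only [coeff_one_sub_X_pow, coeff_invOneSubPow, Nat.add_sub_cancel, mul_assoc] using hcoeff

theorem sum_range_neg_one_pow_mul_choose_mul_choose_of_sub_lt {R : Type*} [CommRing R] {d k m : ℕ}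
    (hdk : d ≤ k) (hm : k - d < m) :
    ∑ i ∈ range m, (-1 : R) ^ i * k.choose i * (d + (m - i) - 1).choose (m - i) =
      (-1) ^ (m - 1) * k.choose m := by
  obtain ⟨n, rfl⟩ : ∃ n, m = n + 1 := ⟨m - 1, by omega⟩
  have hsum := sum_range_succ_neg_one_pow_mul_choose_mul_choose (R := R) hdk (n + 1)
  rw [sum_range_succ, Nat.choose_eq_zero_of_lt hm] at hsum
  simp only [Nat.sub_self, Nat.choose_zero_right, Nat.cast_zero, Nat.cast_one, mul_zero,
    mul_one] at hsum
  rw [Nat.add_sub_cancel, eq_neg_of_add_eq_zero_left hsum, pow_succ]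
  ring

theorem sum_range_neg_one_pow_mul_choose {R : Type*} [CommRing R] {k m : ℕ} (hk : 1 ≤ k)
    (hm : 1 ≤ m) :
    ∑ i ∈ range m, (-1 : R) ^ i * k.choose i = (-1) ^ (m - 1) * (k - 1).choose (m - 1) := by
  obtain ⟨n, rfl⟩ : ∃ n, m = n + 1 := ⟨m - 1, by omega⟩
  simpa using sum_range_succ_neg_one_pow_mul_choose_mul_choose (R := R) hk n

theorem sum_range_choose_mul_pow_mul_eq {R : Type*} [CommRing R] {d k m : ℕ} (hk : 1 ≤ k)
    (hdk : d ≤ k) (hm : k - d < m) (h c : R) (x : ℕ → R)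
    (hx : ∀ i < m, x i = (-1) ^ i * (((d + (m - i) - 1).choose (m - i) : R) - 2) * h ^ (m - i) * c) :
    ∑ i ∈ range m, k.choose i * h ^ i * x i =
      (-1) ^ (m - 1) * (k.choose m - 2 * (k - 1).choose (m - 1)) * h ^ m * c := by
  have hterm : ∀ i ∈ range m, k.choose i * h ^ i * x i =
      ((-1 : R) ^ i * k.choose i * (d + (m - i) - 1).choose (m - i) -
        2 * ((-1) ^ i * k.choose i)) * (h ^ m * c) := by
    intro i hi
    have him : i < m := mem_range.mp hi
    rw [hx i him, ← Nat.add_sub_cancel' him.le, pow_add, Nat.add_sub_cancel_left]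
    ring
  rw [sum_congr rfl hterm, ← sum_mul, sum_sub_distrib, ← mul_sum,
    sum_range_neg_one_pow_mul_choose_mul_choose_of_sub_lt hdk hm,
    sum_range_neg_one_pow_mul_choose hk (by omega)]
  ring

theorem stmt_15_general (m k : ℕ) (hm : 2 ≤ m) (hk : m - 1 ≤ k) (h r s : ℝ)
    (b b' : ℕ → ℝ)
    (hb : ∀ i : ℕ, 1 ≤ i → i ≤ m →
      b i = (-1 : ℝ) ^ (i - 1) * (((m + k - i).choose (m - i + 1) : ℝ) - 2) *
        h ^ (m - i + 1) * r * s)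
    (hb' : ∀ i : ℕ, 1 ≤ i → i ≤ m →
      b' i = (-1 : ℝ) ^ (i - 1) * (((m + k - i - 1).choose (m - i + 1) : ℝ) - 2) *
        h ^ (m - i + 1) * r * s) :
    ∑ i ∈ Finset.range m, (k.choose i : ℝ) * h ^ i * b (i + 1) =
        (-1 : ℝ) ^ (m - 1) * ((k.choose m : ℝ) - 2 * ((k - 1).choose (m - 1) : ℝ)) *
          h ^ m * r * s ∧
    ∑ i ∈ Finset.range m, (k.choose i : ℝ) * h ^ i * b' (i + 1) =
        (-1 : ℝ) ^ (m - 1) * ((k.choose m : ℝ) - 2 * ((k - 1).choose (m - 1) : ℝ)) *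
          h ^ m * r * s := by
  have hk1 : 1 ≤ k := by omega
  simp only [mul_assoc _ r s]
  constructor
  · refine sum_range_choose_mul_pow_mul_eq (d := k) hk1 le_rfl (by omega) h (r * s) _ ?_
    intro i hi
    rw [hb (i + 1) (by omega) (by omega), mul_assoc _ r s, Nat.add_sub_cancel,
      show m - (i + 1) + 1 = m - i by omega, show m + k - (i + 1) = k + (m - i) - 1 by omega]
  · refine sum_range_choose_mul_pow_mul_eq (d := k - 1) hk1 (by omega) (by omega) h (r * s) _ ?_
    intro i hi
    rw [hb' (i + 1) (by omega) (by omega), mul_assoc _ r s, Nat.add_sub_cancel,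
      show m - (i + 1) + 1 = m - i by omega,
      show m + k - (i + 1) - 1 = k - 1 + (m - i) - 1 by omega]

theorem stmt_15 (m k : ℕ) (hm : 2 ≤ m) (hk : m - 1 ≤ k) (h r s : ℝ)
    (hh : 0 < h) (hr : 0 < r) (hs : s = 1 ∨ s = -1)
    (b b' : ℕ → ℝ)
    (hb : ∀ i : ℕ, 1 ≤ i → i ≤ m →
      b i = (-1 : ℝ) ^ (i - 1) * (((m + k - i).choose (m - i + 1) : ℝ) - 2) *
        h ^ (m - i + 1) * r * s)
    (hb' : ∀ i : ℕ, 1 ≤ i → i ≤ m →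
      b' i = (-1 : ℝ) ^ (i - 1) * (((m + k - i - 1).choose (m - i + 1) : ℝ) - 2) *
        h ^ (m - i + 1) * r * s) :
    ∑ i ∈ Finset.range m, (k.choose i : ℝ) * h ^ i * b (i + 1) =
        (-1 : ℝ) ^ (m - 1) * ((k.choose m : ℝ) - 2 * ((k - 1).choose (m - 1) : ℝ)) *
          h ^ m * r * s ∧
    ∑ i ∈ Finset.range m, (k.choose i : ℝ) * h ^ i * b' (i + 1) =
        (-1 : ℝ) ^ (m - 1) * ((k.choose m : ℝ) - 2 * ((k - 1).choose (m - 1) : ℝ)) *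
          h ^ m * r * s :=
  stmt_15_general m k hm hk h r s b b' hb hb'
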